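/- The limit, as n → ∞, of d(SS_n) / (4^n · n^{3/2}) equals 2 / (3√π), where d(SS_n) is the Wiener index of the lattice of lower sets of the shifted staircase poset S_n = {(i,j) : 1 ≤ i ≤ j ≤ n}. -/

import Mathlib

/-!
In the Hasse diagram of the lower sets of a finite poset, the distance between `I` and `J` is
`#(I ∆ J)`: walk down from `I` to `I ⊓ J` and up to `J`, one element at a time, and no edge changes
the symmetric difference by more than one element.

A lower set of `S_n` is determined by the number `h d` of its cells on each diagonal `j - i = d`,
since these are the first `h d` cells of that diagonal. The possible `h` are exactly the functions
`d ↦ #{k ∈ S | d ≤ k}` for `S ⊆ {0, …, n - 1}`. The symmetric difference is counted diagonal by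
diagonal, and replacing `T` by its complement turns the sum over pairs `(S, T)` on diagonal `d`
into `4 ^ d ∑ₛ C(2t, s) |s - t| = 4 ^ d t C(2t, t)` with `t = n - d`. Summing over `d` gives
`3 d(SS_n) = n (2n + 1) C(2n, n)`, and `C(2n, n) ~ 4 ^ n / √(π n)` by Stirling's formula.
-/

/-- The Hasse diagram graph of a preorder: vertices are the elements, with an
edge between two elements exactly when one covers the other. -/
def hasseGraph (α : Type*) [Preorder α] : SimpleGraph α where
  Adj a b := a ⋖ b ∨ b ⋖ a
  symm := ⟨fun _ _ h => h.symm⟩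
  loopless := ⟨fun _ h => h.elim (fun h' => h'.lt.ne rfl) (fun h' => h'.lt.ne rfl)⟩

/-- The Wiener index of a poset: the sum over all ordered pairs of elements
of the graph distance in the Hasse diagram graph. -/
noncomputable def wienerIndex (α : Type*) [Preorder α] : ℕ :=
  ∑ᶠ p : α, ∑ᶠ q : α, (hasseGraph α).dist p q
/-- The shifted staircase poset $S_n = \{(i,j) : 1 ≤ i ≤ j ≤ n\}$ with
componentwise order. -/
abbrev Staircase (n : ℕ) : Type := {p : Fin n × Fin n // p.1 ≤ p.2}

open Finset Real
open Nat (centralBinom)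
open scoped Nat symmDiff

namespace LowerSet

variable {α : Type*} [PartialOrder α]

lemma covBy_of_coe_covBy {I J : LowerSet α} (h : (I : Set α) ⋖ J) : I ⋖ J :=
  ⟨coe_ssubset_coe.1 h.1, fun _ hIK hKJ => h.2 (coe_ssubset_coe.2 hIK) (coe_ssubset_coe.2 hKJ)⟩

variable [Finite α]

/-- Removing a maximal element of `J \ I` from `J` leaves a lower set still containing `I`. -/
lemma exists_le_insert_eq_of_lt {I J : LowerSet α} (h : I < J) :
    ∃ K : LowerSet α, I ≤ K ∧ ∃ x ∉ K, insert x (K : Set α) = J := by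
  obtain ⟨x, ⟨hxJ, hxI⟩, hmax⟩ := (Set.toFinite ((J : Set α) \ I)).exists_maximal
    (Set.sdiff_nonempty.2 (coe_ssubset_coe.2 h).not_subset)
  refine ⟨J.erase x, fun y hy => ⟨coe_subset_coe.2 h.le hy, fun hxy => hxI (I.lower hxy hy)⟩,
    x, fun hx => hx.2 le_rfl, ?_⟩
  ext y
  simp only [Set.mem_insert_iff, coe_erase, Set.mem_sdiff, UpperSet.coe_Ici, Set.mem_Ici]
  constructor
  · rintro (rfl | ⟨hy, -⟩) <;> assumption
  · intro hy
    by_cases hxy : x ≤ y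
    · exact Or.inl (le_antisymm (hmax ⟨hy, fun hyI => hxI (I.lower hxy hyI)⟩ hxy) hxy)
    · exact Or.inr ⟨hy, hxy⟩

lemma covBy_iff_exists_insert {I J : LowerSet α} : I ⋖ J ↔ ∃ x ∉ I, insert x (I : Set α) = J := by
  refine ⟨fun h => ?_, fun ⟨x, hx, hJ⟩ => covBy_of_coe_covBy (hJ ▸ Set.covBy_insert hx)⟩
  obtain ⟨K, hIK, x, hx, hKJ⟩ := exists_le_insert_eq_of_lt h.lt
  have hK : K ⋖ J := covBy_of_coe_covBy (hKJ ▸ Set.covBy_insert hx)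
  obtain rfl : K = I := (h.eq_or_eq hIK hK.le).resolve_right hK.ne
  exact ⟨x, hx, hKJ⟩

lemma ncard_symmDiff_eq_one_of_adj {I J : LowerSet α} (h : (hasseGraph (LowerSet α)).Adj I J) :
    ((I : Set α) ∆ J).ncard = 1 := by
  wlog hIJ : I ⋖ J generalizing I J
  · rw [symmDiff_comm]
    exact this h.symm (h.resolve_left hIJ)
  obtain ⟨x, hx, hJ⟩ := covBy_iff_exists_insert.1 hIJ
  rw [← hJ, symmDiff_of_le (Set.subset_insert x _), Set.insert_sdiff_eq_singleton hx,
    Set.ncard_singleton]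

lemma exists_walk_length_eq_ncard_sdiff {I J : LowerSet α} (h : I ≤ J) :
    ∃ p : (hasseGraph (LowerSet α)).Walk I J, p.length = ((J : Set α) \ I).ncard := by
  induction hk : ((J : Set α) \ I).ncard generalizing J with
  | zero =>
    obtain rfl : J = I := le_antisymm (coe_subset_coe.1 (Set.sdiff_eq_empty.1
      ((Set.ncard_eq_zero (Set.toFinite _)).1 hk))) h
    exact ⟨.nil, rfl⟩
  | succ k ih =>
    have hlt : I < J := h.lt_of_ne (by rintro rfl; simp at hk)
    obtain ⟨K, hIK, x, hx, hKJ⟩ := exists_le_insert_eq_of_lt hlt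
    have hxI : x ∉ (K : Set α) \ I := fun h => hx h.1
    have hk' : ((K : Set α) \ I).ncard = k := by
      rw [← hKJ, Set.insert_sdiff_of_notMem _ (fun h => hx (hIK h)),
        Set.ncard_insert_of_notMem hxI] at hk
      omega
    obtain ⟨p, hp⟩ := ih hIK hk'
    have hadj : (hasseGraph (LowerSet α)).Adj K J :=
      Or.inl (covBy_of_coe_covBy (hKJ ▸ Set.covBy_insert hx))
    exact ⟨p.concat hadj, by simp [hp]⟩

lemma ncard_symmDiff_le_length {I J : LowerSet α} (p : (hasseGraph (LowerSet α)).Walk I J) :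
    ((I : Set α) ∆ J).ncard ≤ p.length := by
  induction p with
  | nil => simp
  | @cons A B C hAB _ ih =>
    calc ((A : Set α) ∆ C).ncard
        ≤ ((A : Set α) ∆ B ∪ (B : Set α) ∆ C).ncard :=
          Set.ncard_le_ncard (symmDiff_triangle _ _ _) (Set.toFinite _)
      _ ≤ ((A : Set α) ∆ B).ncard + ((B : Set α) ∆ C).ncard := Set.ncard_union_le _ _
      _ ≤ _ := by rw [ncard_symmDiff_eq_one_of_adj hAB, SimpleGraph.Walk.length_cons]; omega

theorem hasseGraph_dist_eq_ncard_symmDiff (I J : LowerSet α) :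
    (hasseGraph (LowerSet α)).dist I J = ((I : Set α) ∆ J).ncard := by
  obtain ⟨p, hp⟩ := exists_walk_length_eq_ncard_sdiff (inf_le_left : I ⊓ J ≤ I)
  obtain ⟨q, hq⟩ := exists_walk_length_eq_ncard_sdiff (inf_le_right : I ⊓ J ≤ J)
  have hlen : (p.reverse.append q).length = ((I : Set α) ∆ J).ncard := by
    rw [SimpleGraph.Walk.length_append, SimpleGraph.Walk.length_reverse, hp, hq, coe_inf,
      Set.sdiff_inter_self_eq_sdiff, Set.sdiff_self_inter, Set.symmDiff_def,
      Set.ncard_union_eq disjoint_sdiff_sdiff]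
  refine le_antisymm (hlen ▸ SimpleGraph.dist_le _) ?_
  obtain ⟨r, hr⟩ := (p.reverse.append q).reachable.exists_walk_length_eq_dist
  exact hr ▸ ncard_symmDiff_le_length r

end LowerSet

lemma Finset.range_filter_lt (N c : ℕ) : {r ∈ range N | r < c} = range (min N c) := by
  ext r
  simp only [mem_filter, mem_range]
  omega

lemma Finset.card_range_filter_xor_lt {N a b : ℕ} (ha : a ≤ N) (hb : b ≤ N) :
    #{r ∈ range N | Xor (r < a) (r < b)} = Nat.dist a b := by
  rw [Nat.dist_eq_max_sub_min, ← Nat.card_Ico]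
  congr 1
  ext r
  rw [mem_filter, mem_range, mem_Ico, Xor]
  omega

namespace Finset

variable {α : Type*} [Fintype α] [DecidableEq α]

lemma card_filter_inter_eq {A H : Finset α} (hA : A ⊆ H) :
    #{S : Finset α | S ∩ H = A} = 2 ^ #Hᶜ := by
  rw [← card_powerset]
  refine card_nbij' (· \ H) (A ∪ ·) (fun S _ => ?_) (fun B hB => ?_) (fun S hS => ?_)
    (fun B hB => ?_) <;> simp only [coe_filter, coe_powerset, mem_univ, true_and,
      Set.mem_ofPred_eq, Set.mem_preimage, Set.mem_powerset_iff, coe_subset] at * <;>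
    grind [mem_compl]

lemma sum_apply_card_inter {M : Type*} [AddCommMonoid M] (H : Finset α) (g : ℕ → M) :
    ∑ S : Finset α, g #(S ∩ H) = 2 ^ #Hᶜ • ∑ k ∈ range (#H + 1), (#H).choose k • g k := by
  rw [← sum_powerset_apply_card, smul_sum,
    ← sum_fiberwise_of_maps_to (g := (· ∩ H)) fun S _ => mem_powerset.2 inter_subset_right]
  refine sum_congr rfl fun A hA => ?_
  rw [sum_congr rfl fun S hS => by rw [(mem_filter.1 hS).2], sum_const,
    card_filter_inter_eq (mem_powerset.1 hA)]

/-- Replacing `T` by its complement turns `|#(S ∩ H) - #(T ∩ H)|` into `|#(S ∩ H) + #(T ∩ H) - #H|`,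
a function of the single set `S ⊔ T` of `α ⊕ α`. -/
lemma sum_sum_dist_card_inter (H : Finset α) :
    ∑ S : Finset α, ∑ T : Finset α, Nat.dist #(S ∩ H) #(T ∩ H) =
      4 ^ #Hᶜ * ∑ s ∈ range (2 * #H + 1), (2 * #H).choose s * Nat.dist s #H := by
  have hcompl (T : Finset α) : #(Tᶜ ∩ H) = #H - #(T ∩ H) := by
    rw [inter_comm, ← sdiff_eq_inter_compl, card_sdiff]
  have hH : #(H.disjSum H) = 2 * #H := by rw [card_disjSum, two_mul]
  have hHc : #(H.disjSum H)ᶜ = 2 * #Hᶜ := by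
    rw [card_compl, card_compl, hH, Fintype.card_sum]
    have := card_le_univ H
    omega
  calc ∑ S : Finset α, ∑ T : Finset α, Nat.dist #(S ∩ H) #(T ∩ H)
      = ∑ S : Finset α, ∑ T : Finset α, Nat.dist (#(S ∩ H) + #(T ∩ H)) #H := by
        refine sum_congr rfl fun S _ => ?_
        rw [← Equiv.sum_comp (compl_involutive.toPerm _)]
        refine sum_congr rfl fun T _ => ?_
        rw [Function.Involutive.coe_toPerm, hcompl]
        have := card_le_card (inter_subset_right (s₁ := T) (s₂ := H))
        simp only [Nat.dist]
        omega
    _ = ∑ U : Finset (α ⊕ α), Nat.dist #(U ∩ H.disjSum H) #H := by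
        rw [← sumEquiv.toEquiv.symm.sum_comp, Fintype.sum_prod_type]
        refine sum_congr rfl fun S _ => sum_congr rfl fun T _ => ?_
        rw [← card_toLeft_add_card_toRight, toLeft_inter, toRight_inter]
        simp
    _ = 4 ^ #Hᶜ * ∑ s ∈ range (2 * #H + 1), (2 * #H).choose s * Nat.dist s #H := by
        rw [sum_apply_card_inter (H.disjSum H) (Nat.dist · #H), hH, hHc, pow_mul]
        simp only [smul_eq_mul]
        norm_num

end Finset

namespace Nat

lemma sum_range_choose_mul_sub_two_mul (N : ℕ) {k : ℕ} (hk : 2 * k ≤ N + 1) :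
    ∑ s ∈ range k, N.choose s * (N - 2 * s) = k * N.choose k := by
  induction k with
  | zero => simp
  | succ k ih =>
    rw [sum_range_succ, ih (by omega)]
    calc k * N.choose k + N.choose k * (N - 2 * k)
        = N.choose k * (N - k) := by rw [show N - k = (N - 2 * k) + k by omega]; ring
      _ = (k + 1) * N.choose (k + 1) := by rw [← choose_succ_right_eq, mul_comm]

/-- Reflecting `s ↦ 2t - s` folds the sum onto `s < t`, where it telescopes. -/
lemma sum_choose_mul_dist (t : ℕ) :
    ∑ s ∈ range (2 * t + 1), (2 * t).choose s * dist s t = t * centralBinom t := by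
  have hreflect : ∑ s ∈ range (2 * t + 1), (2 * t).choose s * (s - t) =
      ∑ s ∈ range (2 * t + 1), (2 * t).choose s * (t - s) := by
    rw [← sum_range_reflect]
    refine sum_congr rfl fun s hs => ?_
    have hs : s ≤ 2 * t := by have := mem_range.1 hs; omega
    rw [show 2 * t + 1 - 1 - s = 2 * t - s by omega, choose_symm hs,
      show 2 * t - s - t = t - s by omega]
  have htrunc : ∑ s ∈ range (2 * t + 1), (2 * t).choose s * (t - s) =
      ∑ s ∈ range t, (2 * t).choose s * (t - s) := by
    rw [show 2 * t + 1 = t + (t + 1) by ring, sum_range_add]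
    simp
  calc ∑ s ∈ range (2 * t + 1), (2 * t).choose s * dist s t
      = 2 * ∑ s ∈ range t, (2 * t).choose s * (t - s) := by
        simp only [dist, mul_add, sum_add_distrib, hreflect, htrunc]
        ring
    _ = t * centralBinom t := by
        rw [mul_sum, centralBinom_eq_two_mul_choose,
          ← sum_range_choose_mul_sub_two_mul _ (by omega)]
        refine sum_congr rfl fun s _ => ?_
        rw [show 2 * t - 2 * s = 2 * (t - s) by omega]
        ring

lemma three_mul_sum_four_pow_mul_centralBinom (n : ℕ) :
    3 * ∑ m ∈ range n, 4 ^ m * ((n - m) * centralBinom (n - m)) =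
      n * (2 * n + 1) * centralBinom n := by
  induction n with
  | zero => simp
  | succ n ih =>
    have hshift : ∑ m ∈ range (n + 1), 4 ^ m * ((n + 1 - m) * centralBinom (n + 1 - m)) =
        4 * ∑ m ∈ range n, 4 ^ m * ((n - m) * centralBinom (n - m)) +
          (n + 1) * centralBinom (n + 1) := by
      rw [sum_range_succ', mul_sum]
      simp only [show ∀ m, n + 1 - (m + 1) = n - m from fun m => by omega, pow_succ]
      simp only [pow_zero, one_mul, Nat.sub_zero]
      congr 1
      exact sum_congr rfl fun m _ => by ring
    have hcb := succ_mul_centralBinom_succ n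
    rw [hshift]
    zify at ih hcb ⊢
    linear_combination 4 * ih - 2 * (n : ℤ) * hcb

end Nat

open Stirling in
lemma Nat.centralBinom_mul_sqrt_div_four_pow_eq {n : ℕ} (hn : n ≠ 0) :
    (centralBinom n : ℝ) * √n / 4 ^ n = stirlingSeq (2 * n) / stirlingSeq n ^ 2 := by
  have hcb : (centralBinom n : ℝ) = (2 * n)! / (n ! * n !) := by
    rw [centralBinom_eq_two_mul_choose, Nat.cast_choose ℝ (by omega), two_mul, Nat.add_sub_cancel]
  have hsqrt : √(2 * ((2 * n : ℕ) : ℝ)) = 2 * √n := by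
    rw [show 2 * ((2 * n : ℕ) : ℝ) = 2 ^ 2 * n by push_cast; ring, sqrt_mul (by positivity),
      sqrt_sq (by positivity)]
  have hpow : (((2 * n : ℕ) : ℝ) / exp 1) ^ (2 * n) = 4 ^ n * ((n / exp 1) ^ n) ^ 2 := by
    rw [pow_mul, ← pow_mul _ n 2, pow_mul', ← mul_pow]
    congr 1
    push_cast
    ring
  have hsq : √(n : ℝ) ^ 2 = n := sq_sqrt (by positivity)
  have hsq2 : √(2 * (n : ℝ)) ^ 2 = 2 * n := sq_sqrt (by positivity)
  simp only [stirlingSeq, hsqrt, hpow, hcb]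
  field_simp
  rw [hsq, hsq2]
  ring

open Filter Topology Stirling in
theorem Nat.tendsto_centralBinom_mul_sqrt_div_four_pow :
    Tendsto (fun n : ℕ => (centralBinom n : ℝ) * √n / 4 ^ n) atTop (𝓝 (1 / √π)) := by
  have hπ : √π ≠ 0 := by positivity
  have h := (tendsto_stirlingSeq_sqrt_pi.comp (tendsto_id.const_mul_atTop' two_pos)).div
    (tendsto_stirlingSeq_sqrt_pi.pow 2) (pow_ne_zero 2 hπ)
  rw [show √π / √π ^ 2 = 1 / √π by field_simp] at h
  exact h.congr' ((eventually_ne_atTop 0).mono fun n hn =>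
    (centralBinom_mul_sqrt_div_four_pow_eq hn).symm)

namespace Staircase

variable {n : ℕ}

/-- Cells are indexed from `0`: the cell `(i, j)` has row `i` and diagonal `j - i`. -/
def row (x : Staircase n) : ℕ := x.1.1

def diag (x : Staircase n) : ℕ := x.1.2 - x.1.1

lemma row_add_diag (x : Staircase n) : row x + diag x = x.1.2 := by
  have : (x.1.1 : ℕ) ≤ x.1.2 := x.2
  simp only [row, diag]
  omega

lemma row_add_diag_lt (x : Staircase n) : row x + diag x < n :=
  row_add_diag x ▸ x.1.2.2

lemma le_iff_row_diag {x y : Staircase n} :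
    x ≤ y ↔ row x ≤ row y ∧ row x + diag x ≤ row y + diag y := by
  rw [row_add_diag, row_add_diag]
  exact Iff.rfl

lemma ext_row_diag {x y : Staircase n} (hr : row x = row y) (hd : diag x = diag y) : x = y := by
  have hc := row_add_diag x
  rw [hr, hd, row_add_diag] at hc
  exact Subtype.ext (Prod.ext (Fin.ext hr) (Fin.ext hc.symm))

lemma le_of_diag_eq {x y : Staircase n} (hd : diag x = diag y) (hr : row x ≤ row y) : x ≤ y :=
  le_iff_row_diag.2 ⟨hr, by omega⟩

def cell (r d : ℕ) (h : r + d < n) : Staircase n :=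
  ⟨(⟨r, by omega⟩, ⟨r + d, h⟩), by simp [Fin.le_def]⟩

@[simp] lemma row_cell (r d : ℕ) (h : r + d < n) : row (cell r d h) = r := rfl

@[simp] lemma diag_cell (r d : ℕ) (h : r + d < n) : diag (cell r d h) = d := by
  simp [diag, cell]

lemma card_filter_diag_eq (d : ℕ) (P : ℕ → Prop) [DecidablePred P] :
    #{x : Staircase n | diag x = d ∧ P (row x)} = #{r ∈ range (n - d) | P r} := by
  refine card_bij (fun x _ => row x) (fun x hx => ?_) (fun x hx y hy hxy => ?_) (fun r hr => ?_)
  · simp only [mem_filter, mem_univ, true_and, mem_range] at hx ⊢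
    have := row_add_diag_lt x
    exact ⟨by omega, hx.2⟩
  · simp only [mem_filter, mem_univ, true_and] at hx hy
    exact ext_row_diag hxy (hx.1.trans hy.1.symm)
  · simp only [mem_filter, mem_univ, true_and, mem_range] at hr ⊢
    exact ⟨cell r d (by omega), ⟨diag_cell .., hr.2⟩, rfl⟩

lemma card_filter_diag_row_lt (d a : ℕ) :
    #{x : Staircase n | diag x = d ∧ row x < a} = min (n - d) a := by
  rw [card_filter_diag_eq d (· < a), range_filter_lt, card_range]

open scoped Classical in
noncomputable def diagCount (I : LowerSet (Staircase n)) (d : ℕ) : ℕ :=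
  #{x | x ∈ I ∧ diag x = d}

theorem mem_iff_row_lt_diagCount {I : LowerSet (Staircase n)} {x : Staircase n} :
    x ∈ I ↔ row x < diagCount I (diag x) := by
  classical
  have hx := row_add_diag_lt x
  constructor
  · intro hxI
    have := card_le_card (monotone_filter_right univ (p := fun y => diag y = diag x ∧
      row y < row x + 1) (q := fun y => y ∈ I ∧ diag y = diag x)
      fun y _ hy => ⟨I.lower (le_of_diag_eq hy.1 (by omega)) hxI, hy.1⟩)
    rw [card_filter_diag_row_lt] at this
    exact lt_of_lt_of_le (by omega) this
  · intro hlt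
    by_contra hxI
    have := card_le_card (monotone_filter_right univ (p := fun y => y ∈ I ∧ diag y = diag x)
      (q := fun y => diag y = diag x ∧ row y < row x)
      fun y _ hy => ⟨hy.2, not_le.1 fun hle => hxI (I.lower (le_of_diag_eq hy.2.symm hle) hy.1)⟩)
    rw [card_filter_diag_row_lt] at this
    exact absurd (lt_of_lt_of_le hlt this) (by omega)

lemma cell_mem_iff {I : LowerSet (Staircase n)} {r d : ℕ} (h : r + d < n) :
    cell r d h ∈ I ↔ r < diagCount I d := by
  simpa using mem_iff_row_lt_diagCount (x := cell r d h)

lemma diagCount_le (I : LowerSet (Staircase n)) (d : ℕ) : diagCount I d ≤ n - d := by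
  classical
  calc diagCount I d ≤ #{x : Staircase n | diag x = d ∧ row x < n} :=
        card_le_card (monotone_filter_right univ fun x _ hx =>
          ⟨hx.2, by have := row_add_diag_lt x; omega⟩)
    _ ≤ n - d := by rw [card_filter_diag_row_lt]; exact min_le_left _ _

lemma diagCount_succ_le (I : LowerSet (Staircase n)) (d : ℕ) :
    diagCount I (d + 1) ≤ diagCount I d := by
  refine le_of_forall_lt fun r hr => ?_
  have h : r + (d + 1) < n := by have := diagCount_le I (d + 1); omega
  refine (cell_mem_iff (r := r) (d := d) (by omega)).1 (I.lower ?_ ((cell_mem_iff h).2 hr))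
  exact le_iff_row_diag.2 (by simp)

lemma diagCount_le_succ_add_one (I : LowerSet (Staircase n)) (d : ℕ) :
    diagCount I d ≤ diagCount I (d + 1) + 1 := by
  refine le_of_forall_lt fun c hc => ?_
  obtain _ | r := c
  · omega
  have h : r + 1 + d < n := by have := diagCount_le I d; omega
  have := (cell_mem_iff (r := r) (d := d + 1) (by omega)).1
    (I.lower (le_iff_row_diag.2 (by simp; omega)) ((cell_mem_iff h).2 hc))
  omega

lemma diagCount_injective : Function.Injective (diagCount (n := n)) := fun I J h =>
  SetLike.ext fun _ => by rw [mem_iff_row_lt_diagCount, mem_iff_row_lt_diagCount, h]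

def countGe (S : Finset (Fin n)) (d : ℕ) : ℕ := #{k ∈ S | d ≤ k.val}

lemma countGe_eq_add_ite (S : Finset (Fin n)) (k : Fin n) :
    countGe S k = countGe S (k + 1) + if k ∈ S then 1 else 0 := by
  simp only [countGe, card_filter, ← sum_ite_eq' S k fun _ => 1, ← sum_add_distrib]
  refine sum_congr rfl fun j _ => ?_
  rcases lt_trichotomy (j : ℕ) k with h | h | h
  · simp [Fin.ext_iff, h.not_ge, h.ne, show ¬ (k : ℕ) + 1 ≤ j by omega]
  · simp [Fin.ext_iff, h]
  · simp [Fin.ext_iff, h.le, h.ne', show (k : ℕ) + 1 ≤ j by omega]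

lemma countGe_eq_zero (S : Finset (Fin n)) {d : ℕ} (h : n ≤ d) : countGe S d = 0 :=
  card_eq_zero.2 (filter_eq_empty_iff.2 fun k _ => by have := k.2; omega)

lemma countGe_le_succ_add_one (S : Finset (Fin n)) (d : ℕ) :
    countGe S d ≤ countGe S (d + 1) + 1 := by
  by_cases hd : d < n
  · have := countGe_eq_add_ite S ⟨d, hd⟩
    split_ifs at this <;> simp_all
  · rw [countGe_eq_zero S (not_lt.1 hd)]
    omega

lemma countGe_antitone (S : Finset (Fin n)) : Antitone (countGe S) := fun _ _ h =>
  card_le_card (monotone_filter_right S fun _ _ hk => h.trans hk)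

lemma countGe_le_add (S : Finset (Fin n)) {d d' : ℕ} (h : d ≤ d') :
    countGe S d ≤ countGe S d' + (d' - d) := by
  induction d', h using Nat.le_induction with
  | base => simp
  | succ d' hd ih => have := countGe_le_succ_add_one S d'; omega

lemma countGe_le (S : Finset (Fin n)) (d : ℕ) : countGe S d ≤ n - d := by
  have hn := countGe_eq_zero S le_rfl
  rcases le_total d n with h | h
  · simpa [hn] using countGe_le_add S h
  · exact (countGe_antitone S h).trans (by simp [hn])

lemma countGe_injective : Function.Injective (countGe (n := n)) := fun S T h => by
  ext k
  have := countGe_eq_add_ite S k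
  rw [h, countGe_eq_add_ite T k] at this
  split_ifs at this <;> simp_all

/-- `S` is the set of positions where `h` drops. -/
lemma exists_countGe_eq {h : ℕ → ℕ} (h_succ_le : ∀ d, h (d + 1) ≤ h d)
    (h_le_succ : ∀ d, h d ≤ h (d + 1) + 1) (h_eq_zero : ∀ d, n ≤ d → h d = 0) :
    ∃ S : Finset (Fin n), countGe S = h := by
  refine ⟨univ.filter fun k : Fin n => h (k + 1) < h k, funext fun d => ?_⟩
  rcases le_total d n with hd | hd
  · induction hd using Nat.decreasingInduction with
    | self => exact (countGe_eq_zero _ le_rfl).trans (h_eq_zero n le_rfl).symm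
    | of_succ k hk ih =>
      rw [countGe_eq_add_ite _ ⟨k, hk⟩, ih]
      have := h_succ_le k
      have := h_le_succ k
      split_ifs with hmem <;> simp only [mem_filter, mem_univ, true_and] at hmem <;> omega
  · exact (countGe_eq_zero _ hd).trans (h_eq_zero d hd).symm

/-- Read as a shifted diagram, `ofFinset S` has the elements of `S`, plus one, as row lengths. -/
def ofFinset (S : Finset (Fin n)) : LowerSet (Staircase n) where
  carrier := {x | row x < countGe S (diag x)}
  lower' x y hyx hx := by
    obtain ⟨hr, hc⟩ := le_iff_row_diag.1 hyx
    simp only [Set.mem_ofPred_eq] at hx ⊢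
    rcases le_total (diag y) (diag x) with h | h
    · exact hr.trans_lt (hx.trans_le (countGe_antitone S h))
    · have := countGe_le_add S h
      omega

lemma mem_ofFinset {S : Finset (Fin n)} {x : Staircase n} :
    x ∈ ofFinset S ↔ row x < countGe S (diag x) := Iff.rfl

lemma diagCount_ofFinset (S : Finset (Fin n)) : diagCount (ofFinset S) = countGe S := by
  classical
  funext d
  rw [diagCount, filter_congr (q := fun x => diag x = d ∧ row x < countGe S d) fun x _ => by
      rw [mem_ofFinset, and_comm]
      exact and_congr_right fun h => h ▸ Iff.rfl,
    card_filter_diag_row_lt, min_eq_right (countGe_le S d)]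

theorem ofFinset_bijective : Function.Bijective (ofFinset (n := n)) := by
  refine ⟨fun S T h => countGe_injective ?_, fun I => ?_⟩
  · rw [← diagCount_ofFinset, h, diagCount_ofFinset]
  · obtain ⟨S, hS⟩ := exists_countGe_eq (n := n) (h := diagCount I) (diagCount_succ_le I)
      (diagCount_le_succ_add_one I) fun d hd => Nat.le_zero.1 (by have := diagCount_le I d; omega)
    exact ⟨S, diagCount_injective (by rw [diagCount_ofFinset, hS])⟩

theorem ncard_symmDiff_eq_sum_dist (I J : LowerSet (Staircase n)) :
    ((I : Set (Staircase n)) ∆ J).ncard =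
      ∑ d ∈ range n, Nat.dist (diagCount I d) (diagCount J d) := by
  classical
  have hIJ : (I : Set (Staircase n)) ∆ J =
      {x | Xor (row x < diagCount I (diag x)) (row x < diagCount J (diag x))} := by
    ext x
    simp only [Set.mem_symmDiff, SetLike.mem_coe, mem_iff_row_lt_diagCount]
    rfl
  rw [hIJ, Set.ncard_eq_toFinset_card', Set.toFinset_ofPred, card_eq_sum_card_fiberwise
    (f := diag) (t := range n) fun x _ => mem_range.2 (by have := row_add_diag_lt x; omega)]
  refine sum_congr rfl fun d _ => ?_
  rw [filter_filter, filter_congr (q := fun x => diag x = d ∧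
      Xor (row x < diagCount I d) (row x < diagCount J d)) fun x _ => by
      rw [and_comm]
      exact and_congr_right fun h => h ▸ Iff.rfl,
    card_filter_diag_eq d (fun r => Xor (r < diagCount I d) (r < diagCount J d)),
    card_range_filter_xor_lt (diagCount_le I d) (diagCount_le J d)]

lemma countGe_eq_card_inter_compl (S : Finset (Fin n)) (d : ℕ) :
    countGe S d = #(S ∩ (univ.filter fun k : Fin n => (k : ℕ) < d)ᶜ) := by
  rw [countGe, compl_filter, inter_filter, inter_univ]
  simp only [not_lt]

lemma sum_sum_dist_countGe {d : ℕ} (hd : d ≤ n) :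
    ∑ S : Finset (Fin n), ∑ T : Finset (Fin n), Nat.dist (countGe S d) (countGe T d) =
      4 ^ d * ((n - d) * centralBinom (n - d)) := by
  have hL : #(univ.filter fun k : Fin n => (k : ℕ) < d) = d := by
    rw [Fin.card_filter_val_lt, min_eq_right hd]
  have hH : #(univ.filter fun k : Fin n => (k : ℕ) < d)ᶜ = n - d := by
    rw [card_compl, Fintype.card_fin, hL]
  simp only [countGe_eq_card_inter_compl]
  rw [sum_sum_dist_card_inter, compl_compl, hL, hH, Nat.sum_choose_mul_dist]

theorem wienerIndex_lowerSet_eq_sum (n : ℕ) :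
    wienerIndex (LowerSet (Staircase n)) =
      ∑ d ∈ range n, 4 ^ d * ((n - d) * centralBinom (n - d)) := by
  let e := Equiv.ofBijective _ (ofFinset_bijective (n := n))
  calc wienerIndex (LowerSet (Staircase n))
      = ∑ S, ∑ T, (hasseGraph (LowerSet (Staircase n))).dist (ofFinset S) (ofFinset T) := by
        rw [wienerIndex, ← finsum_comp_equiv e, finsum_eq_sum_of_fintype]
        exact sum_congr rfl fun S _ => by rw [← finsum_comp_equiv e, finsum_eq_sum_of_fintype]; rfl
    _ = ∑ S, ∑ d ∈ range n, ∑ T, Nat.dist (countGe S d) (countGe T d) := by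
        simp only [LowerSet.hasseGraph_dist_eq_ncard_symmDiff, ncard_symmDiff_eq_sum_dist,
          diagCount_ofFinset]
        exact sum_congr rfl fun S _ => sum_comm
    _ = ∑ d ∈ range n, 4 ^ d * ((n - d) * centralBinom (n - d)) := by
        rw [sum_comm]
        exact sum_congr rfl fun d hd => sum_sum_dist_countGe (mem_range.1 hd).le

theorem three_mul_wienerIndex_lowerSet (n : ℕ) :
    3 * wienerIndex (LowerSet (Staircase n)) = n * (2 * n + 1) * centralBinom n := by
  rw [wienerIndex_lowerSet_eq_sum, Nat.three_mul_sum_four_pow_mul_centralBinom]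

end Staircase

open Filter in
/-- Asymptotics of the Wiener index of the lattice of lower sets of the
shifted staircase. -/
theorem wiener_staircase_asymptotic :
    Tendsto
      (fun n : ℕ =>
        (wienerIndex (LowerSet (Staircase n)) : ℝ) /
          ((4 : ℝ) ^ n * (n : ℝ) ^ ((3 : ℝ) / 2)))
      atTop (nhds (2 / (3 * Real.sqrt Real.pi))) := by
  have hfactor : Tendsto (fun n : ℕ => (2 + 1 / (n : ℝ)) / 3) atTop (nhds (2 / 3)) := by
    simpa using (tendsto_one_div_atTop_nhds_zero_nat.const_add 2).div_const (3 : ℝ)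
  have h := hfactor.mul Nat.tendsto_centralBinom_mul_sqrt_div_four_pow
  rw [show 2 / 3 * (1 / √π) = 2 / (3 * √π) by ring] at h
  refine h.congr' ((eventually_ne_atTop 0).mono fun n hn => ?_)
  have hW : (wienerIndex (LowerSet (Staircase n)) : ℝ) = n * (2 * n + 1) * centralBinom n / 3 := by
    have := congrArg (Nat.cast (R := ℝ)) (Staircase.three_mul_wienerIndex_lowerSet n)
    push_cast at this
    linarith
  have hpow : (n : ℝ) ^ ((3 : ℝ) / 2) = n * √n := by
    rw [show (3 : ℝ) / 2 = 1 + 1 / 2 by norm_num, Real.rpow_add (by positivity), Real.rpow_one,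
      Real.sqrt_eq_rpow]
  have hsq : √(n : ℝ) ^ 2 = n := Real.sq_sqrt (by positivity)
  dsimp only
  rw [hW, hpow]
  field_simp
  rw [hsq]
  ring
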